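/- arXiv:2604.15154 — 3 statements merged into one kernel-verified Lean document; each statement's English description precedes it below -/
import Mathlib

section
/- Let G, H be finitely generated groups with free product G * H, and let T be the Bass–Serre tree of G * H: vertices are the empty word φ together with cosets wG and wH (w reduced and ending in the other factor or trivial), with edges φ—φG, φ—φH, wG—wgH for g ∈ G \ {e_G} (w ending in H), and wH—whG for h ∈ H \ {e_H} (w ending in G). Then T is a tree, i.e., a connected graph with no cycles. -/
open Monoid

variable (G H : Type*) [Group G] [Group H]

/-- Vertices of the Bass–Serre tree of `G * H`: the extra base vertex `φ` (`none`),
together with the left cosets `wG` and the left cosets `wH`. -/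
abbrev BSVertex :=
  Option ((Coprod G H ⧸ (Coprod.inl : G →* Coprod G H).range) ⊕
          (Coprod G H ⧸ (Coprod.inr : H →* Coprod G H).range))

/-- The basic (oriented) edge relation: `φ` is joined to the cosets `G` and `H`, and a
coset `aG` is joined to a coset `bH` exactly when they share a nontrivial element
(equivalently, `aG = zG` and `bH = zH` for some `z ≠ 1`; this encodes the edges
`wG — wgH` for `g ≠ e_G` and `wH — whG` for `h ≠ e_H`). -/
def bsRel (v w : BSVertex G H) : Prop :=
  (v = none ∧
    (w = some (Sum.inl ((1 : Coprod G H) : Coprod G H ⧸ (Coprod.inl : G →* Coprod G H).range)) ∨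
     w = some (Sum.inr ((1 : Coprod G H) : Coprod G H ⧸ (Coprod.inr : H →* Coprod G H).range)))) ∨
  (∃ (x : Coprod G H ⧸ (Coprod.inl : G →* Coprod G H).range)
     (y : Coprod G H ⧸ (Coprod.inr : H →* Coprod G H).range) (z : Coprod G H),
      z ≠ 1 ∧ v = some (Sum.inl x) ∧ w = some (Sum.inr y) ∧
      (z : Coprod G H ⧸ (Coprod.inl : G →* Coprod G H).range) = x ∧
      (z : Coprod G H ⧸ (Coprod.inr : H →* Coprod G H).range) = y)

/-- The Bass–Serre tree of the free product `G * H`, as a simple graph. -/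
def bsGraph : SimpleGraph (BSVertex G H) where
  Adj v w := bsRel G H v w ∨ bsRel G H w v
  symm := by constructor; intro v w h; exact h.symm
  loopless := by
    constructor
    intro v h
    rcases h with h | h <;>
      rcases h with ⟨h1, h2⟩ | ⟨x, y, z, hz, h1, h2, _, _⟩ <;> simp_all

/-!
Root the graph at `φ`. A coset vertex `zG ≠ G` has a parent: if `w` is the shortest element of
`zG` (its reduced form ends in a letter of `H`), the parent is `wH`, whose shortest element is
`w` with that letter removed; symmetrically for `zH`. Conversely every edge `zG — zH` (`z ≠ 1`)
joins a vertex to its parent, according to whether the reduced form of `z` ends in `G` or in `H`.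
A graph in which parents strictly lower a `ℕ`-valued level and every edge is a parent edge is a
tree: parents lead to the root, and on a cycle both neighbours of a vertex of maximal level
would be its parent.
-/

namespace Monoid.CoprodI.Word

variable {ι : Type*} {M : ι → Type*} [∀ i, Monoid (M i)] [DecidableEq ι] [∀ i, DecidableEq (M i)]

theorem equiv_eq_empty_iff {k : CoprodI M} : equiv k = empty ↔ k = 1 :=
  (Equiv.eq_symm_apply _).symm

theorem equivPair_tail_equiv_of_mul {i : ι} (m : M i) (k : CoprodI M) :
    (equivPair i (equiv (of m * k))).tail = (equivPair i (equiv k)).tail := by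
  change (equivPair i ((of m * k : CoprodI M) • (empty : Word M))).tail = _
  rw [mul_smul, equivPair_smul_same]
  rfl

theorem of_head_mul_prod_tail {i : ι} (w : Word M) :
    of (equivPair i w).head * (equivPair i w).tail.prod = w.prod := by
  rw [← prod_rcons, ← equivPair_symm, Equiv.symm_apply_apply]

theorem length_equivPair_tail_add_one {i : ι} {w : Word M} (hw : w.fstIdx = some i) :
    (equivPair i w).tail.toList.length + 1 = w.toList.length := by
  have hrcons : rcons (equivPair i w) = w := (equivPair i).symm_apply_apply w
  by_cases hhead : (equivPair i w).head = 1
  · rw [rcons, dif_pos hhead] at hrcons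
    rw [← hrcons] at hw
    exact absurd hw (equivPair i w).fstIdx_ne
  · rw [rcons, dif_neg hhead] at hrcons
    conv_rhs => rw [← hrcons]
    simp [cons]

theorem fstIdx_eq_some_not {M : Bool → Type*} [∀ i, Monoid (M i)] {w : Word M} (hw : w ≠ empty)
    {b : Bool} (hb : w.fstIdx ≠ some b) : w.fstIdx = some !b := by
  rcases hfst : w.fstIdx with _ | c
  · exact absurd (Word.ext (by simpa [fstIdx] using hfst)) hw
  · cases b <;> cases c <;> simp_all

end Monoid.CoprodI.Word

namespace SimpleGraph

variable {V : Type*} {Γ : SimpleGraph V} {root : V} {level : V → ℕ} {parent : V → V}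

theorem reachable_of_parent (adj_parent : ∀ v, v ≠ root → Γ.Adj v (parent v))
    (level_parent_lt : ∀ v, v ≠ root → level (parent v) < level v) (v : V) :
    Γ.Reachable root v := by
  induction hv : level v using Nat.strong_induction_on generalizing v with
  | _ n ih =>
    rcases eq_or_ne v root with rfl | hv_root
    · rfl
    · exact (ih _ (hv ▸ level_parent_lt v hv_root) _ rfl).trans (adj_parent v hv_root).symm.reachable

theorem eq_parent_of_adj_of_level_le (parent_root : parent root = root)
    (level_parent_lt : ∀ v, v ≠ root → level (parent v) < level v)
    (eq_parent_of_adj : ∀ u v, Γ.Adj u v → u = parent v ∨ v = parent u)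
    {u v : V} (huv : Γ.Adj u v) (hle : level v ≤ level u) : v = parent u := by
  refine (eq_parent_of_adj u v huv).resolve_left fun hu => ?_
  have hv_root : v ≠ root := by
    rintro rfl
    exact huv.ne (hu.trans parent_root)
  exact (level_parent_lt v hv_root).not_ge (hu ▸ hle)

theorem isAcyclic_of_parent (parent_root : parent root = root)
    (level_parent_lt : ∀ v, v ≠ root → level (parent v) < level v)
    (eq_parent_of_adj : ∀ u v, Γ.Adj u v → u = parent v ∨ v = parent u) : Γ.IsAcyclic := by
  classical
  intro v c hc
  obtain ⟨u, hu, hmax⟩ := c.support.toFinset.exists_max_image level ⟨v, by simp⟩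
  rw [List.mem_toFinset] at hu
  set c' := c.rotate u hu
  have hc' : c'.IsCycle := hc.rotate hu
  have parent_of_mem {w : V} (hw : w ∈ c'.support) (huw : Γ.Adj u w) : w = parent u :=
    eq_parent_of_adj_of_level_le parent_root level_parent_lt eq_parent_of_adj huw
      (hmax w (by simpa [c'] using hw))
  exact hc'.snd_ne_penultimate <|
    (parent_of_mem (c'.getVert_mem_support 1) (c'.adj_snd hc'.not_nil)).trans
      (parent_of_mem (c'.getVert_mem_support _) (c'.adj_penultimate hc'.not_nil).symm).symm

theorem isTree_of_parent (adj_parent : ∀ v, v ≠ root → Γ.Adj v (parent v))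
    (parent_root : parent root = root)
    (level_parent_lt : ∀ v, v ≠ root → level (parent v) < level v)
    (eq_parent_of_adj : ∀ u v, Γ.Adj u v → u = parent v ∨ v = parent u) : Γ.IsTree where
  connected := Γ.connected_iff_exists_forall_reachable.mpr
    ⟨root, reachable_of_parent adj_parent level_parent_lt⟩
  isAcyclic := isAcyclic_of_parent parent_root level_parent_lt eq_parent_of_adj

end SimpleGraph

namespace BassSerre

open CoprodI

universe u v

variable {G : Type u} {H : Type v} [Group G] [Group H]

variable (G H) in
abbrev factors : Bool → Type (max u v) := fun b => cond b (ULift.{v} G) (ULift.{u} H)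

instance (b : Bool) : Group (factors G H b) := by
  cases b <;> dsimp <;> infer_instance

noncomputable instance (b : Bool) : DecidableEq (factors G H b) := Classical.decEq _

variable (G H) in
/-- Reduced words are only available for Mathlib's indexed free product `CoprodI`. -/
noncomputable def coprodEquiv : Coprod G H ≃* CoprodI (factors G H) :=
  MonoidHom.toMulEquiv
    (Coprod.lift ((of (i := true)).comp (MulEquiv.ulift.symm : G ≃* ULift.{v} G).toMonoidHom)
      ((of (i := false)).comp (MulEquiv.ulift.symm : H ≃* ULift.{u} H).toMonoidHom))
    (CoprodI.lift fun b => b.rec (Coprod.inr.comp MulEquiv.ulift.toMonoidHom)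
      (Coprod.inl.comp MulEquiv.ulift.toMonoidHom))
    (Coprod.hom_ext (by ext; rfl) (by ext; rfl))
    (CoprodI.ext_hom _ _ fun b => by cases b <;> ext <;> rfl)

variable (G H) in
/-- Defined by cases so that `Coprod G H ⧸ factorRange G H b` is, on the nose, the quotient used
in `BSVertex` for the factor `G` (`b = true`) or `H` (`b = false`). -/
def factorRange : Bool → Subgroup (Coprod G H)
  | true => (Coprod.inl : G →* Coprod G H).range
  | false => (Coprod.inr : H →* Coprod G H).range

theorem mem_factorRange_iff {b : Bool} {z : Coprod G H} :
    z ∈ factorRange G H b ↔ ∃ m : factors G H b, coprodEquiv G H z = of m := by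
  cases b
  · refine ⟨fun ⟨h, hz⟩ => ⟨ULift.up h, hz ▸ rfl⟩, fun ⟨m, hm⟩ => ⟨m.down, ?_⟩⟩
    exact (coprodEquiv G H).injective hm.symm
  · refine ⟨fun ⟨g, hz⟩ => ⟨ULift.up g, hz ▸ rfl⟩, fun ⟨m, hm⟩ => ⟨m.down, ?_⟩⟩
    exact (coprodEquiv G H).injective hm.symm

/-- The normal form of `z⁻¹` with its leading `b`-letter removed (words are taken apart at their
left end, hence the inverse). It only depends on the coset `z • factorRange G H b`, and its
product is the inverse of the shortest element of that coset. -/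
noncomputable def tailWord (b : Bool) (z : Coprod G H) : Word (factors G H) :=
  (Word.equivPair b (Word.equiv (coprodEquiv G H z⁻¹))).tail

theorem tailWord_eq_of_inv_mul_mem {b : Bool} {z z' : Coprod G H}
    (h : z⁻¹ * z' ∈ factorRange G H b) : tailWord b z' = tailWord b z := by
  obtain ⟨m, hm⟩ := mem_factorRange_iff.mp h
  have hz' : coprodEquiv G H z'⁻¹ = of m⁻¹ * coprodEquiv G H z⁻¹ := by
    rw [map_inv (of : factors G H b →* _), ← hm, ← map_inv, ← map_mul]
    congr 1
    group
  rw [tailWord, hz', Word.equivPair_tail_equiv_of_mul, tailWord]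

theorem tailWord_eq_of_fstIdx_ne {b : Bool} {z : Coprod G H}
    (h : (Word.equiv (coprodEquiv G H z⁻¹)).fstIdx ≠ some b) :
    tailWord b z = Word.equiv (coprodEquiv G H z⁻¹) := by
  rw [tailWord, Word.equivPair_eq_of_fstIdx_ne h]

noncomputable def cosetWord (b : Bool) (x : Coprod G H ⧸ factorRange G H b) : Word (factors G H) :=
  Quotient.liftOn' x (tailWord b) fun _ _ h =>
    (tailWord_eq_of_inv_mul_mem (QuotientGroup.leftRel_apply.mp h)).symm

noncomputable def cosetRep (b : Bool) (x : Coprod G H ⧸ factorRange G H b) : Coprod G H :=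
  ((coprodEquiv G H).symm (cosetWord b x).prod)⁻¹

theorem cosetWord_mk (b : Bool) (z : Coprod G H) :
    cosetWord b (z : Coprod G H ⧸ factorRange G H b) = tailWord b z :=
  rfl

theorem fstIdx_cosetWord_ne (b : Bool) (x : Coprod G H ⧸ factorRange G H b) :
    (cosetWord b x).fstIdx ≠ some b :=
  QuotientGroup.induction_on x fun _ => Word.Pair.fstIdx_ne _

theorem equiv_cosetRep_inv (b : Bool) (x : Coprod G H ⧸ factorRange G H b) :
    Word.equiv (coprodEquiv G H (cosetRep b x)⁻¹) = cosetWord b x := by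
  rw [cosetRep, inv_inv, MulEquiv.apply_symm_apply]
  exact Word.equiv.apply_symm_apply _

theorem mk_cosetRep (b : Bool) (x : Coprod G H ⧸ factorRange G H b) :
    (cosetRep b x : Coprod G H ⧸ factorRange G H b) = x := by
  induction x using QuotientGroup.induction_on with | H z => ?_
  set p := Word.equivPair b (Word.equiv (coprodEquiv G H z⁻¹))
  have hprod : of p.head * p.tail.prod = coprodEquiv G H z⁻¹ := by
    rw [Word.of_head_mul_prod_tail]
    exact Word.equiv.symm_apply_apply _
  refine QuotientGroup.eq.mpr (mem_factorRange_iff.mpr ⟨p.head⁻¹, ?_⟩)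
  calc coprodEquiv G H ((cosetRep b z)⁻¹ * z)
      = (of p.head)⁻¹ * (of p.head * p.tail.prod) * coprodEquiv G H z := by
        simp [cosetRep, cosetWord_mk, tailWord, p]
    _ = of p.head⁻¹ := by rw [hprod, map_inv, map_inv, inv_mul_cancel_right]

theorem cosetWord_eq_empty_iff {b : Bool} {x : Coprod G H ⧸ factorRange G H b} :
    cosetWord b x = Word.empty ↔ x = ((1 : Coprod G H) : Coprod G H ⧸ factorRange G H b) := by
  constructor
  · intro hx
    rw [← mk_cosetRep b x, cosetRep, hx, Word.prod_empty, map_one, inv_one]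
  · rintro rfl
    rw [cosetWord_mk, tailWord_eq_of_fstIdx_ne] <;>
      simp [Word.equiv_eq_empty_iff.mpr, Word.fstIdx]

theorem cosetRep_mk_of_fstIdx_ne {b : Bool} {z : Coprod G H}
    (h : (Word.equiv (coprodEquiv G H z⁻¹)).fstIdx ≠ some b) :
    cosetRep b (z : Coprod G H ⧸ factorRange G H b) = z := by
  rw [cosetRep, cosetWord_mk, tailWord_eq_of_fstIdx_ne h]
  change ((coprodEquiv G H).symm (Word.equiv.symm (Word.equiv _)))⁻¹ = z
  simp

variable (G H) in
def cosetVertex : (b : Bool) → Coprod G H ⧸ factorRange G H b → BSVertex G H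
  | true, x => some (.inl x)
  | false, y => some (.inr y)

theorem exists_eq_cosetVertex {v : BSVertex G H} (hv : v ≠ none) :
    ∃ b x, v = cosetVertex G H b x := by
  rcases v with _ | x | y
  · exact absurd rfl hv
  · exact ⟨true, x, rfl⟩
  · exact ⟨false, y, rfl⟩

theorem adj_none_cosetVertex_one (b : Bool) :
    (bsGraph G H).Adj none (cosetVertex G H b (1 : Coprod G H)) := by
  cases b
  · exact .inl (.inl ⟨rfl, .inr rfl⟩)
  · exact .inl (.inl ⟨rfl, .inl rfl⟩)

theorem adj_cosetVertex_not {z : Coprod G H} (hz : z ≠ 1) (b : Bool) :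
    (bsGraph G H).Adj (cosetVertex G H b z) (cosetVertex G H (!b) z) := by
  cases b
  · exact .inr (.inr ⟨_, _, z, hz, rfl, rfl, rfl, rfl⟩)
  · exact .inl (.inr ⟨_, _, z, hz, rfl, rfl, rfl, rfl⟩)

variable (G H) in
noncomputable def level : BSVertex G H → ℕ
  | none => 0
  | some (.inl x) => (cosetWord true x).toList.length + 1
  | some (.inr y) => (cosetWord false y).toList.length + 1

theorem level_cosetVertex (b : Bool) (x : Coprod G H ⧸ factorRange G H b) :
    level G H (cosetVertex G H b x) = (cosetWord b x).toList.length + 1 := by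
  cases b <;> rfl

noncomputable def cosetParent (b : Bool) (x : Coprod G H ⧸ factorRange G H b) : BSVertex G H :=
  if cosetWord b x = Word.empty then none else cosetVertex G H (!b) (cosetRep b x)

variable (G H) in
noncomputable def parent : BSVertex G H → BSVertex G H
  | none => none
  | some (.inl x) => cosetParent true x
  | some (.inr y) => cosetParent false y

theorem parent_cosetVertex (b : Bool) (x : Coprod G H ⧸ factorRange G H b) :
    parent G H (cosetVertex G H b x) = cosetParent b x := by
  cases b <;> rfl

theorem adj_parent (v : BSVertex G H) (hv : v ≠ none) : (bsGraph G H).Adj v (parent G H v) := by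
  obtain ⟨b, x, rfl⟩ := exists_eq_cosetVertex hv
  rw [parent_cosetVertex, cosetParent]
  split_ifs with hx
  · exact (cosetWord_eq_empty_iff.mp hx ▸ adj_none_cosetVertex_one b).symm
  · have hrep : cosetRep b x ≠ 1 := fun h => hx <| by
      rw [← equiv_cosetRep_inv, h, inv_one, map_one, Word.equiv_eq_empty_iff]
    simpa only [mk_cosetRep] using adj_cosetVertex_not hrep b

theorem level_parent_lt (v : BSVertex G H) (hv : v ≠ none) :
    level G H (parent G H v) < level G H v := by
  obtain ⟨b, x, rfl⟩ := exists_eq_cosetVertex hv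
  rw [parent_cosetVertex, cosetParent, level_cosetVertex]
  split_ifs with hx
  · exact Nat.succ_pos _
  · rw [level_cosetVertex, cosetWord_mk, tailWord, equiv_cosetRep_inv]
    have := Word.length_equivPair_tail_add_one
      (Word.fstIdx_eq_some_not hx (fstIdx_cosetWord_ne b x))
    omega

theorem parent_cosetVertex_one (b : Bool) :
    parent G H (cosetVertex G H b (1 : Coprod G H)) = none := by
  rw [parent_cosetVertex, cosetParent, if_pos (cosetWord_eq_empty_iff.mpr rfl)]

theorem parent_cosetVertex_mk_of_fstIdx_ne {z : Coprod G H} (hz : z ≠ 1) {b : Bool}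
    (h : (Word.equiv (coprodEquiv G H z⁻¹)).fstIdx ≠ some b) :
    parent G H (cosetVertex G H b z) = cosetVertex G H (!b) z := by
  have hword : cosetWord b (z : Coprod G H ⧸ factorRange G H b) ≠ Word.empty := by
    rw [cosetWord_mk, tailWord_eq_of_fstIdx_ne h, Ne, Word.equiv_eq_empty_iff]
    simpa using hz
  rw [parent_cosetVertex, cosetParent, if_neg hword, cosetRep_mk_of_fstIdx_ne h]

theorem cosetVertex_eq_parent_or {z : Coprod G H} (hz : z ≠ 1) {b c : Bool} (hbc : b ≠ c) :
    cosetVertex G H b z = parent G H (cosetVertex G H c z) ∨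
      cosetVertex G H c z = parent G H (cosetVertex G H b z) := by
  by_cases h : (Word.equiv (coprodEquiv G H z⁻¹)).fstIdx = some b
  · obtain rfl : b = !c := by cases b <;> cases c <;> simp_all
    exact .inl (parent_cosetVertex_mk_of_fstIdx_ne hz (by rw [h]; simp)).symm
  · obtain rfl : c = !b := by cases b <;> cases c <;> simp_all
    exact .inr (parent_cosetVertex_mk_of_fstIdx_ne hz h).symm

theorem eq_parent_or_of_bsRel {u v : BSVertex G H} (h : bsRel G H u v) :
    u = parent G H v ∨ v = parent G H u := by
  rcases h with ⟨rfl, rfl | rfl⟩ | ⟨x, y, z, hz, rfl, rfl, rfl, rfl⟩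
  · exact .inl (parent_cosetVertex_one true).symm
  · exact .inl (parent_cosetVertex_one false).symm
  · exact cosetVertex_eq_parent_or (b := true) (c := false) hz (by decide)

theorem eq_parent_or_of_adj {u v : BSVertex G H} (h : (bsGraph G H).Adj u v) :
    u = parent G H v ∨ v = parent G H u :=
  h.elim eq_parent_or_of_bsRel fun h => (eq_parent_or_of_bsRel h).symm

end BassSerre

/-- The Bass–Serre graph of a free product `G * H` is a tree: a connected
acyclic graph. -/
theorem stmt8 : (bsGraph G H).IsTree :=
  SimpleGraph.isTree_of_parent BassSerre.adj_parent rfl BassSerre.level_parent_lt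
    fun _ _ => BassSerre.eq_parent_or_of_adj
end

section
/- Let X be a metric space with decomposition X = Y₀ ∪ Y₁, fix r₀ > 0, and let Z₀ := N_{r₀}(Y₀) \ N_{r₀}(Y₁), Z₁ := N_{r₀}(Y₁) \ N_{r₀}(Y₀), Z₀₁ := N_{r₀}(Y₀) ∩ N_{r₀}(Y₁). Let X₀ be a countable dense subset of X, and let a ∈ B(ℓ²(X₀, H)) have propagation less than r₀. Define a₀ := χ_{Z₀} a χ_{Z₀} + χ_{Z₀} a χ_{Z₀₁} + χ_{Z₀₁} a χ_{Z₀} + χ_{Z₀₁} a χ_{Z₀₁} and a₁ := χ_{Z₁} a χ_{Z₁} + χ_{Z₁} a χ_{Z₀₁} + χ_{Z₀₁} a χ_{Z₁}. Then: (i) a = a₀ + a₁; (ii) a₀ and a₁ have propagation less than r₀; (iii) a₀ is supported on N_{r₀}(Y₀) × N_{r₀}(Y₀) and a₁ on N_{r₀}(Y₁) × N_{r₀}(Y₁); (iv) ‖a₀‖ ≤ 4‖a‖ and ‖a₁‖ ≤ 3‖a‖. -/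
/-!
Write `N₀, N₁` for the closed `r₀`-neighbourhoods of `Y₀, Y₁`; they cover `X`, so
`χ_{Z₀} + χ_{Z₁} + χ_{Z₀₁} = 1` and `a` is the sum of its nine blocks `χ_S a χ_T`.
A point of `Z₁` lies outside `N₀`, hence in `Y₁`, so it is more than `r₀` away from every point
of `Z₀`; since `a` has propagation `< r₀`, the two blocks between `Z₀` and `Z₁` vanish, and the
remaining seven are `a₀ + a₁`. Each block has norm at most `‖a‖` and is supported where `a` is,
inside the product of its two pieces, which gives the other three claims.
-/

open scoped Classical ENNReal

open ContinuousLinearMap Metric Set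

namespace lp

variable {ι 𝕜 : Type*} [NontriviallyNormedField 𝕜] {E : ι → Type*}
  [∀ i, NormedAddCommGroup (E i)] [∀ i, NormedSpace 𝕜 (E i)] {p : ℝ≥0∞} [Fact (1 ≤ p)]

def IsIndicatorOperator (P : lp E p →L[𝕜] lp E p) (s : Set ι) : Prop :=
  ∀ f i, (P f : ∀ i, E i) i = if i ∈ s then (f : ∀ i, E i) i else 0

namespace IsIndicatorOperator

variable {P Q R : lp E p →L[𝕜] lp E p} {s t r : Set ι}

theorem norm_le_one (hP : IsIndicatorOperator P s) : ‖P‖ ≤ 1 := by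
  refine opNorm_le_bound _ zero_le_one fun f => ?_
  rw [one_mul]
  refine lp.norm_mono (zero_lt_one.trans_le Fact.out).ne' fun i => ?_
  rw [hP]
  split_ifs <;> simp

theorem norm_comp_comp_le (hP : IsIndicatorOperator P s) (hQ : IsIndicatorOperator Q t)
    (a : lp E p →L[𝕜] lp E p) : ‖P ∘L a ∘L Q‖ ≤ ‖a‖ :=
  calc ‖P ∘L a ∘L Q‖ ≤ ‖P‖ * (‖a‖ * ‖Q‖) :=
        (opNorm_comp_le _ _).trans (by gcongr; exact opNorm_comp_le _ _)
    _ ≤ 1 * (‖a‖ * 1) := by gcongr; exacts [hP.norm_le_one, hQ.norm_le_one]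
    _ = ‖a‖ := by ring

theorem norm_add_add_le (hP : IsIndicatorOperator P s) (hR : IsIndicatorOperator R r)
    (a : lp E p →L[𝕜] lp E p) : ‖P ∘L a ∘L P + P ∘L a ∘L R + R ∘L a ∘L P‖ ≤ 3 * ‖a‖ := by
  refine (norm_add₃_le (E := lp E p →L[𝕜] lp E p)).trans ?_
  linarith [hP.norm_comp_comp_le hP a, hP.norm_comp_comp_le hR a, hR.norm_comp_comp_le hP a]

theorem norm_add_add_add_le (hP : IsIndicatorOperator P s) (hR : IsIndicatorOperator R r)
    (a : lp E p →L[𝕜] lp E p) :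
    ‖P ∘L a ∘L P + P ∘L a ∘L R + R ∘L a ∘L P + R ∘L a ∘L R‖ ≤ 4 * ‖a‖ := by
  refine (norm_add_le _ _).trans ?_
  linarith [hP.norm_add_add_le hR a, hR.norm_comp_comp_le hR a]

theorem add_add_eq_id (hP : IsIndicatorOperator P (s \ t)) (hQ : IsIndicatorOperator Q (t \ s))
    (hR : IsIndicatorOperator R (s ∩ t)) (hst : s ∪ t = univ) : P + Q + R = .id 𝕜 _ := by
  refine ContinuousLinearMap.ext fun f => lp.ext (funext fun i => ?_)
  simp only [add_apply, lp.coeFn_add, Pi.add_apply, hP f i, hQ f i, hR f i, coe_id', id_eq]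
  obtain his | hit : i ∈ s ∨ i ∈ t := eq_univ_iff_forall.mp hst i
  · by_cases hit : i ∈ t <;> simp [his, hit]
  · by_cases his : i ∈ s <;> simp [his, hit]

end IsIndicatorOperator

variable [DecidableEq ι]

/-- The pairs `(x, y)` at which the matrix entry `b_{x,y} : E y → E x` is nonzero. -/
def matrixSupport (b : lp E p →L[𝕜] lp E p) : Set (ι × ι) :=
  {z | ∃ ξ : E z.2, (b (lp.single p z.2 ξ) : ∀ i, E i) z.1 ≠ 0}

theorem matrixSupport_add_subset_of {b c : lp E p →L[𝕜] lp E p} {S : Set (ι × ι)}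
    (hb : matrixSupport b ⊆ S) (hc : matrixSupport c ⊆ S) : matrixSupport (b + c) ⊆ S := by
  rintro ⟨x, y⟩ ⟨ξ, hξ⟩
  by_contra h
  have hbξ : (b (lp.single p y ξ) : ∀ i, E i) x = 0 := not_not.mp fun h' => h (hb ⟨ξ, h'⟩)
  have hcξ : (c (lp.single p y ξ) : ∀ i, E i) x = 0 := not_not.mp fun h' => h (hc ⟨ξ, h'⟩)
  exact hξ (by simp [hbξ, hcξ])

theorem eq_zero_of_matrixSupport_eq_empty (hp : p ≠ ⊤) {b : lp E p →L[𝕜] lp E p}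
    (hb : matrixSupport b = ∅) : b = 0 := by
  refine ext_continuousLinearMap hp fun y => ContinuousLinearMap.ext fun ξ => lp.ext ?_
  funext x
  by_contra h
  exact (hb ▸ (⟨ξ, h⟩ : (x, y) ∈ matrixSupport b) : (x, y) ∈ (∅ : Set (ι × ι)))

namespace IsIndicatorOperator

variable {P Q R : lp E p →L[𝕜] lp E p} {s t r N N' : Set ι}

theorem apply_single (hP : IsIndicatorOperator P s) (y : ι) (ξ : E y) :
    P (lp.single p y ξ) = if y ∈ s then lp.single p y ξ else 0 := by
  refine lp.ext (funext fun x => ?_)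
  rw [hP]
  by_cases hxy : x = y
  · subst hxy; split_ifs <;> simp
  · split_ifs <;> simp [hxy]

theorem comp_comp_single_apply (hP : IsIndicatorOperator P s) (hQ : IsIndicatorOperator Q t)
    (a : lp E p →L[𝕜] lp E p) (x y : ι) (ξ : E y) :
    ((P ∘L a ∘L Q) (lp.single p y ξ) : ∀ i, E i) x =
      if x ∈ s ∧ y ∈ t then (a (lp.single p y ξ) : ∀ i, E i) x else 0 := by
  by_cases hy : y ∈ t <;> simp [hQ.apply_single, hP _ x, hy]

theorem matrixSupport_comp_comp_subset (hP : IsIndicatorOperator P s)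
    (hQ : IsIndicatorOperator Q t) (a : lp E p →L[𝕜] lp E p) (hs : s ⊆ N) (ht : t ⊆ N') :
    matrixSupport (P ∘L a ∘L Q) ⊆ matrixSupport a ∩ N ×ˢ N' := by
  rintro ⟨x, y⟩ ⟨ξ, hξ⟩
  rw [hP.comp_comp_single_apply hQ] at hξ
  split_ifs at hξ with hxy
  · exact ⟨⟨ξ, hξ⟩, hs hxy.1, ht hxy.2⟩
  · exact absurd rfl hξ

theorem comp_comp_eq_zero (hp : p ≠ ⊤) (hP : IsIndicatorOperator P s)
    (hQ : IsIndicatorOperator Q t) {a : lp E p →L[𝕜] lp E p}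
    (ha : Disjoint (matrixSupport a) (s ×ˢ t)) : P ∘L a ∘L Q = 0 :=
  eq_zero_of_matrixSupport_eq_empty hp <| subset_empty_iff.mp <|
    (hP.matrixSupport_comp_comp_subset hQ a subset_rfl subset_rfl).trans ha.inter_eq.subset

theorem matrixSupport_add_add_subset (hP : IsIndicatorOperator P s)
    (hR : IsIndicatorOperator R r) (a : lp E p →L[𝕜] lp E p) (hs : s ⊆ N) (hr : r ⊆ N) :
    matrixSupport (P ∘L a ∘L P + P ∘L a ∘L R + R ∘L a ∘L P) ⊆ matrixSupport a ∩ N ×ˢ N :=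
  matrixSupport_add_subset_of (matrixSupport_add_subset_of
    (hP.matrixSupport_comp_comp_subset hP a hs hs) (hP.matrixSupport_comp_comp_subset hR a hs hr))
    (hR.matrixSupport_comp_comp_subset hP a hr hs)

theorem matrixSupport_add_add_add_subset (hP : IsIndicatorOperator P s)
    (hR : IsIndicatorOperator R r) (a : lp E p →L[𝕜] lp E p) (hs : s ⊆ N) (hr : r ⊆ N) :
    matrixSupport (P ∘L a ∘L P + P ∘L a ∘L R + R ∘L a ∘L P + R ∘L a ∘L R) ⊆
      matrixSupport a ∩ N ×ˢ N :=
  matrixSupport_add_subset_of (hP.matrixSupport_add_add_subset hR a hs hr)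
    (hR.matrixSupport_comp_comp_subset hR a hr hr)

end IsIndicatorOperator

theorem eq_add_of_disjoint_matrixSupport (hp : p ≠ ⊤) {N₀ N₁ : Set ι}
    {P₀ P₁ P₀₁ a : lp E p →L[𝕜] lp E p} (h₀ : IsIndicatorOperator P₀ (N₀ \ N₁))
    (h₁ : IsIndicatorOperator P₁ (N₁ \ N₀)) (h₀₁ : IsIndicatorOperator P₀₁ (N₀ ∩ N₁))
    (hN : N₀ ∪ N₁ = univ) (ha₀₁ : Disjoint (matrixSupport a) ((N₀ \ N₁) ×ˢ (N₁ \ N₀)))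
    (ha₁₀ : Disjoint (matrixSupport a) ((N₁ \ N₀) ×ˢ (N₀ \ N₁))) :
    a = (P₀ ∘L a ∘L P₀ + P₀ ∘L a ∘L P₀₁ + P₀₁ ∘L a ∘L P₀ + P₀₁ ∘L a ∘L P₀₁) +
      (P₁ ∘L a ∘L P₁ + P₁ ∘L a ∘L P₀₁ + P₀₁ ∘L a ∘L P₁) :=
  calc a = (P₀ + P₁ + P₀₁) ∘L a ∘L (P₀ + P₁ + P₀₁) := by
        rw [h₀.add_add_eq_id h₁ h₀₁ hN, id_comp, comp_id]
    _ = _ := by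
        simp only [add_comp, comp_add, h₀.comp_comp_eq_zero hp h₁ ha₀₁,
          h₁.comp_comp_eq_zero hp h₀ ha₁₀]
        abel

end lp

namespace Metric

variable {X : Type*} [PseudoMetricSpace X] {Y₀ Y₁ : Set X} {r : ℝ}

theorem infDist_le_or_infDist_le_of_union_eq_univ (hY : Y₀ ∪ Y₁ = univ) (hr : 0 ≤ r) (x : X) :
    infDist x Y₀ ≤ r ∨ infDist x Y₁ ≤ r := by
  rcases (hY ▸ mem_univ x : x ∈ Y₀ ∪ Y₁) with hx | hx
  · exact .inl ((infDist_zero_of_mem hx).trans_le hr)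
  · exact .inr ((infDist_zero_of_mem hx).trans_le hr)

theorem lt_dist_of_lt_infDist_of_union_eq_univ (hY : Y₀ ∪ Y₁ = univ) (hr : 0 ≤ r) {x y : X}
    (hx : r < infDist x Y₁) (hy : r < infDist y Y₀) : r < dist x y := by
  have hy₁ : y ∈ Y₁ := by
    refine (hY ▸ mem_univ y : y ∈ Y₀ ∪ Y₁).resolve_left fun hy₀ => ?_
    exact (infDist_zero_of_mem hy₀ ▸ hy).not_ge hr
  exact hx.trans_le (infDist_le_dist_of_mem hy₁)

end Metric

open lp

theorem stmt13_general {X : Type*} [MetricSpace X] (X₀ : Set X) [DecidableEq X₀]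
    {H : Type*} [NormedAddCommGroup H] [InnerProductSpace ℂ H]
    (Y₀ Y₁ : Set X) (hcover : Y₀ ∪ Y₁ = Set.univ) (r₀ : ℝ) (hr₀ : 0 < r₀)
    (Z₀ Z₁ Z₀₁ : Set X)
    (hZ₀ : Z₀ = {x | Metric.infDist x Y₀ ≤ r₀} \ {x | Metric.infDist x Y₁ ≤ r₀})
    (hZ₁ : Z₁ = {x | Metric.infDist x Y₁ ≤ r₀} \ {x | Metric.infDist x Y₀ ≤ r₀})
    (hZ₀₁ : Z₀₁ = {x | Metric.infDist x Y₀ ≤ r₀} ∩ {x | Metric.infDist x Y₁ ≤ r₀})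
    -- the multiplication operators χ_S
    (χ : Set X → (lp (fun _ : X₀ => H) 2 →L[ℂ] lp (fun _ : X₀ => H) 2))
    (hχ : ∀ (S : Set X) (f : lp (fun _ : X₀ => H) 2) (x : X₀),
      (χ S f : ∀ _ : X₀, H) x = if (x : X) ∈ S then (f : ∀ _ : X₀, H) x else 0)
    (a : lp (fun _ : X₀ => H) 2 →L[ℂ] lp (fun _ : X₀ => H) 2)
    (hprop : ∀ x y : X₀, (∃ ξ : H, (a (lp.single 2 y ξ) : ∀ _ : X₀, H) x ≠ 0) →
      dist (x : X) (y : X) < r₀)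
    (a₀ a₁ : lp (fun _ : X₀ => H) 2 →L[ℂ] lp (fun _ : X₀ => H) 2)
    (ha₀ : a₀ = χ Z₀ ∘L a ∘L χ Z₀ + χ Z₀ ∘L a ∘L χ Z₀₁ + χ Z₀₁ ∘L a ∘L χ Z₀ +
      χ Z₀₁ ∘L a ∘L χ Z₀₁)
    (ha₁ : a₁ = χ Z₁ ∘L a ∘L χ Z₁ + χ Z₁ ∘L a ∘L χ Z₀₁ + χ Z₀₁ ∘L a ∘L χ Z₁) :
    -- (i) a = a₀ + a₁
    a = a₀ + a₁ ∧
    -- (ii) a₀, a₁ have propagation less than r₀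
    (∀ x y : X₀, (∃ ξ : H, (a₀ (lp.single 2 y ξ) : ∀ _ : X₀, H) x ≠ 0) →
      dist (x : X) (y : X) < r₀) ∧
    (∀ x y : X₀, (∃ ξ : H, (a₁ (lp.single 2 y ξ) : ∀ _ : X₀, H) x ≠ 0) →
      dist (x : X) (y : X) < r₀) ∧
    -- (iii) supports
    (∀ x y : X₀, (∃ ξ : H, (a₀ (lp.single 2 y ξ) : ∀ _ : X₀, H) x ≠ 0) →
      Metric.infDist (x : X) Y₀ ≤ r₀ ∧ Metric.infDist (y : X) Y₀ ≤ r₀) ∧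
    (∀ x y : X₀, (∃ ξ : H, (a₁ (lp.single 2 y ξ) : ∀ _ : X₀, H) x ≠ 0) →
      Metric.infDist (x : X) Y₁ ≤ r₀ ∧ Metric.infDist (y : X) Y₁ ≤ r₀) ∧
    -- (iv) norm bounds
    ‖a₀‖ ≤ 4 * ‖a‖ ∧ ‖a₁‖ ≤ 3 * ‖a‖ := by
  set N₀ : Set X₀ := {x | infDist (x : X) Y₀ ≤ r₀}
  set N₁ : Set X₀ := {x | infDist (x : X) Y₁ ≤ r₀}
  have hχ' (S : Set X) : IsIndicatorOperator (χ S) (Subtype.val ⁻¹' S) := hχ S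
  have hχ₀ : IsIndicatorOperator (χ Z₀) (N₀ \ N₁) := hZ₀ ▸ hχ' _
  have hχ₁ : IsIndicatorOperator (χ Z₁) (N₁ \ N₀) := hZ₁ ▸ hχ' _
  have hχ₀₁ : IsIndicatorOperator (χ Z₀₁) (N₀ ∩ N₁) := hZ₀₁ ▸ hχ' _
  have hN : N₀ ∪ N₁ = univ :=
    eq_univ_of_forall fun x => infDist_le_or_infDist_le_of_union_eq_univ hcover hr₀.le (x : X)
  have hfar {Y Y' : Set X} (hY : Y ∪ Y' = univ) {s t : Set X₀}
      (hs : ∀ x ∈ s, ¬infDist (x : X) Y' ≤ r₀) (ht : ∀ y ∈ t, ¬infDist (y : X) Y ≤ r₀) :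
      Disjoint (matrixSupport a) (s ×ˢ t) :=
    disjoint_left.mpr fun ⟨x, y⟩ hxy ⟨hx, hy⟩ => (hprop x y hxy).not_gt <|
      lt_dist_of_lt_infDist_of_union_eq_univ hY hr₀.le (not_le.mp (hs x hx)) (not_le.mp (ht y hy))
  have hsupp₀ : matrixSupport a₀ ⊆ matrixSupport a ∩ N₀ ×ˢ N₀ :=
    ha₀ ▸ hχ₀.matrixSupport_add_add_add_subset hχ₀₁ a sdiff_subset inter_subset_left
  have hsupp₁ : matrixSupport a₁ ⊆ matrixSupport a ∩ N₁ ×ˢ N₁ :=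
    ha₁ ▸ hχ₁.matrixSupport_add_add_subset hχ₀₁ a sdiff_subset inter_subset_right
  refine ⟨?_, fun x y h => hprop x y (hsupp₀ (a := (x, y)) h).1,
    fun x y h => hprop x y (hsupp₁ (a := (x, y)) h).1, fun x y h => (hsupp₀ (a := (x, y)) h).2,
    fun x y h => (hsupp₁ (a := (x, y)) h).2, ha₀ ▸ hχ₀.norm_add_add_add_le hχ₀₁ a,
    ha₁ ▸ hχ₁.norm_add_add_le hχ₀₁ a⟩
  exact ha₀ ▸ ha₁ ▸ eq_add_of_disjoint_matrixSupport ENNReal.ofNat_ne_top hχ₀ hχ₁ hχ₀₁ hN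
    (hfar hcover (fun x hx => hx.2) (fun y hy => hy.2))
    (hfar ((union_comm Y₁ Y₀).trans hcover) (fun x hx => hx.2) (fun y hy => hy.2))

/-- For a decomposition `X = Y₀ ∪ Y₁`, `r₀ > 0`, the pieces
`Z₀ = N_{r₀}(Y₀) \ N_{r₀}(Y₁)`, `Z₁ = N_{r₀}(Y₁) \ N_{r₀}(Y₀)`, `Z₀₁ = N_{r₀}(Y₀) ∩ N_{r₀}(Y₁)`,
and an operator `a` of propagation `< r₀` on `ℓ²(X₀,H)`, the cut-downs
`a₀ = χ_{Z₀}aχ_{Z₀} + χ_{Z₀}aχ_{Z₀₁} + χ_{Z₀₁}aχ_{Z₀} + χ_{Z₀₁}aχ_{Z₀₁}` and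
`a₁ = χ_{Z₁}aχ_{Z₁} + χ_{Z₁}aχ_{Z₀₁} + χ_{Z₀₁}aχ_{Z₁}` satisfy: `a = a₀ + a₁`; both have
propagation `< r₀`; `a₀` is supported on `N_{r₀}(Y₀)²` and `a₁` on `N_{r₀}(Y₁)²`; and
`‖a₀‖ ≤ 4‖a‖`, `‖a₁‖ ≤ 3‖a‖`. -/
theorem stmt13 {X : Type*} [MetricSpace X] (X₀ : Set X) [DecidableEq X₀]
    (hX₀c : X₀.Countable) (hX₀d : Dense X₀)
    {H : Type*} [NormedAddCommGroup H] [InnerProductSpace ℂ H] [CompleteSpace H]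
    (Y₀ Y₁ : Set X) (hcover : Y₀ ∪ Y₁ = Set.univ) (r₀ : ℝ) (hr₀ : 0 < r₀)
    (Z₀ Z₁ Z₀₁ : Set X)
    (hZ₀ : Z₀ = {x | Metric.infDist x Y₀ ≤ r₀} \ {x | Metric.infDist x Y₁ ≤ r₀})
    (hZ₁ : Z₁ = {x | Metric.infDist x Y₁ ≤ r₀} \ {x | Metric.infDist x Y₀ ≤ r₀})
    (hZ₀₁ : Z₀₁ = {x | Metric.infDist x Y₀ ≤ r₀} ∩ {x | Metric.infDist x Y₁ ≤ r₀})
    -- the multiplication operators χ_S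
    (χ : Set X → (lp (fun _ : X₀ => H) 2 →L[ℂ] lp (fun _ : X₀ => H) 2))
    (hχ : ∀ (S : Set X) (f : lp (fun _ : X₀ => H) 2) (x : X₀),
      (χ S f : ∀ _ : X₀, H) x = if (x : X) ∈ S then (f : ∀ _ : X₀, H) x else 0)
    (a : lp (fun _ : X₀ => H) 2 →L[ℂ] lp (fun _ : X₀ => H) 2)
    (hprop : ∀ x y : X₀, (∃ ξ : H, (a (lp.single 2 y ξ) : ∀ _ : X₀, H) x ≠ 0) →
      dist (x : X) (y : X) < r₀)
    (a₀ a₁ : lp (fun _ : X₀ => H) 2 →L[ℂ] lp (fun _ : X₀ => H) 2)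
    (ha₀ : a₀ = χ Z₀ ∘L a ∘L χ Z₀ + χ Z₀ ∘L a ∘L χ Z₀₁ + χ Z₀₁ ∘L a ∘L χ Z₀ +
      χ Z₀₁ ∘L a ∘L χ Z₀₁)
    (ha₁ : a₁ = χ Z₁ ∘L a ∘L χ Z₁ + χ Z₁ ∘L a ∘L χ Z₀₁ + χ Z₀₁ ∘L a ∘L χ Z₁) :
    -- (i) a = a₀ + a₁
    a = a₀ + a₁ ∧
    -- (ii) a₀, a₁ have propagation less than r₀
    (∀ x y : X₀, (∃ ξ : H, (a₀ (lp.single 2 y ξ) : ∀ _ : X₀, H) x ≠ 0) →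
      dist (x : X) (y : X) < r₀) ∧
    (∀ x y : X₀, (∃ ξ : H, (a₁ (lp.single 2 y ξ) : ∀ _ : X₀, H) x ≠ 0) →
      dist (x : X) (y : X) < r₀) ∧
    -- (iii) supports
    (∀ x y : X₀, (∃ ξ : H, (a₀ (lp.single 2 y ξ) : ∀ _ : X₀, H) x ≠ 0) →
      Metric.infDist (x : X) Y₀ ≤ r₀ ∧ Metric.infDist (y : X) Y₀ ≤ r₀) ∧
    (∀ x y : X₀, (∃ ξ : H, (a₁ (lp.single 2 y ξ) : ∀ _ : X₀, H) x ≠ 0) →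
      Metric.infDist (x : X) Y₁ ≤ r₀ ∧ Metric.infDist (y : X) Y₁ ≤ r₀) ∧
    -- (iv) norm bounds
    ‖a₀‖ ≤ 4 * ‖a‖ ∧ ‖a₁‖ ≤ 3 * ‖a‖ :=
  stmt13_general X₀ Y₀ Y₁ hcover r₀ hr₀ Z₀ Z₁ Z₀₁ hZ₀ hZ₁ hZ₀₁ χ hχ a hprop a₀ a₁ ha₀ ha₁
end

section
/- Let G, H be finitely generated groups with free product G * H (word metric for S_G ∪ S_H), Bass–Serre tree T, and projection π : G*H → T. Fix w ∈ G*H and n ∈ ℕ, and let T_n^w denote the subtree of vertices of T of combinatorial depth ≤ n below the vertex π(w) in the direction away from the root (as defined via reduced words with prefix below w). Then the preimage π^{-1}(T_{n+1}^w) decomposes as π^{-1}(T_{n+1}^w) = π^{-1}(T_n^w) ⊔ ⨆_{v} C_v, where v ranges over the vertices of T at distance exactly n+1 from π(w) in T_{n+1}^w, and each C_v = π^{-1}({v}) is isometric — via left translation in G*H — to G \ {e_G} or H \ {e_H} shifted by a coset representative; moreover for distinct such v, v', and y ∈ C_v, y' ∈ C_{v'}, the distance d(y, y') equals d(y, u)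 + d(u, u') + d(u', y') where u, u' are the branch points (coset representatives) of v, v'. -/
/-!
Reduced words are normal forms in `G ∗ H`: through Mathlib's `CoprodI.Word`, two reduced words
with the same product are equal. This separates the fibres, and it yields the length formula: the
word length of an element is the sum of the factor lengths of the letters of its reduced word.
The upper bound concatenates geodesics of the factors; for the lower bound, a word over `S` can be
reduced one letter at a time without increasing that sum, by the triangle inequality in a factor.
If the branch words `s = p c r` and `s' = p c' r'` first differ at `c ≠ c'` (letters of the same
factor), then for `y = w' s a` and `y' = w' s' b` the element `y⁻¹ y'` has the reduced word
`a⁻¹ r⁻¹ (c⁻¹ c') r' b`, so the length formula splits `d(y, y')` as `|a| + d(u, u') + |b|`.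
-/

open Monoid

variable (G H : Type*) [Group G] [Group H]

/-- Letters of the free product `G * H`, and their evaluation in `G * H`. -/
def evalLetter : G ⊕ H → Coprod G H :=
  Sum.elim (fun g => (Coprod.inl g : Coprod G H)) (fun h => (Coprod.inr h : Coprod G H))

/-- Product of a list of letters in `G * H`. -/
def listProd (l : List (G ⊕ H)) : Coprod G H := (l.map (evalLetter G H)).prod

/-- A list of letters is reduced. -/
def Reduced (l : List (G ⊕ H)) : Prop :=
  (∀ a ∈ l, a ≠ Sum.inl (1 : G) ∧ a ≠ Sum.inr (1 : H)) ∧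
  l.Chain' (fun a b => a.isLeft ≠ b.isLeft)

/-- Word metric for the generating set `S`. -/
noncomputable def wordDist {M : Type*} [Group M] (S : Set M) (x y : M) : ℕ :=
  sInf {n | ∃ l : List M, (∀ a ∈ l, a ∈ S) ∧ l.prod = x⁻¹ * y ∧ l.length = n}

section WordMetric

variable {M N : Type*} [Group M] [Group N] {S : Set M}

structure IsSymmGenSet (S : Set M) : Prop where
  inv_mem : ∀ s ∈ S, s⁻¹ ∈ S
  closure_eq_top : Subgroup.closure S = ⊤

lemma wordDist_le_length {x y : M} {l : List M} (hl : ∀ a ∈ l, a ∈ S) (hp : l.prod = x⁻¹ * y) :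
    wordDist S x y ≤ l.length :=
  Nat.sInf_le ⟨l, hl, hp, rfl⟩

lemma wordDist_eq_wordDist_one (x y : M) : wordDist S x y = wordDist S 1 (x⁻¹ * y) := by
  simp [wordDist]

@[simp] lemma wordDist_mul_left (z x y : M) : wordDist S (z * x) (z * y) = wordDist S x y := by
  simp [wordDist_eq_wordDist_one x, wordDist_eq_wordDist_one (z * x), mul_inv_rev, mul_assoc]

@[simp] lemma wordDist_self (x : M) : wordDist S x x = 0 :=
  Nat.le_zero.mp (wordDist_le_length (l := []) (by simp) (by simp))

lemma wordDist_one_le_one_of_mem {s : M} (hs : s ∈ S) : wordDist S 1 s ≤ 1 :=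
  wordDist_le_length (l := [s]) (by simpa using hs) (by simp)

lemma IsSymmGenSet.exists_length_eq_wordDist (hS : IsSymmGenSet S) (x y : M) :
    ∃ l : List M, (∀ a ∈ l, a ∈ S) ∧ l.prod = x⁻¹ * y ∧ l.length = wordDist S x y := by
  have hmem : x⁻¹ * y ∈ Submonoid.closure (S ∪ S⁻¹) := by
    rw [← Subgroup.closure_toSubmonoid, hS.closure_eq_top]; trivial
  obtain ⟨l, hl, hp⟩ := Submonoid.exists_list_of_mem_closure hmem
  have hne : {n | ∃ l : List M, (∀ a ∈ l, a ∈ S) ∧ l.prod = x⁻¹ * y ∧ l.length = n}.Nonempty :=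
    ⟨l.length, l, fun a ha => (hl a ha).elim id fun h => by simpa using hS.inv_mem _ h, hp, rfl⟩
  exact Nat.sInf_mem hne

lemma IsSymmGenSet.wordDist_one_inv (hS : IsSymmGenSet S) (x : M) :
    wordDist S 1 x⁻¹ = wordDist S 1 x := by
  have key : ∀ y : M, wordDist S 1 y⁻¹ ≤ wordDist S 1 y := fun y => by
    obtain ⟨l, hl, hp, hlen⟩ := hS.exists_length_eq_wordDist 1 y
    refine hlen ▸ le_of_le_of_eq (wordDist_le_length (l := (l.map (·⁻¹)).reverse) ?_ ?_) (by simp)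
    · intro a ha
      obtain ⟨b, hb, rfl⟩ := List.mem_map.mp (List.mem_reverse.mp ha)
      exact hS.inv_mem b (hl b hb)
    · rw [← List.prod_inv_reverse, hp]; simp
  exact le_antisymm (key x) (by simpa using key x⁻¹)

lemma IsSymmGenSet.wordDist_one_mul_le (hS : IsSymmGenSet S) (x y : M) :
    wordDist S 1 (x * y) ≤ wordDist S 1 x + wordDist S 1 y := by
  obtain ⟨l, hl, hp, hlen⟩ := hS.exists_length_eq_wordDist 1 x
  obtain ⟨l', hl', hp', hlen'⟩ := hS.exists_length_eq_wordDist 1 y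
  rw [← hlen, ← hlen', ← List.length_append]
  refine wordDist_le_length (fun a ha => ?_) (by simp_all)
  exact (List.mem_append.mp ha).elim (hl a) (hl' a)

lemma IsSymmGenSet.wordDist_one_map_le (hS : IsSymmGenSet S) {T : Set N} (f : M →* N)
    (hf : ∀ s ∈ S, f s ∈ T) (x : M) : wordDist T 1 (f x) ≤ wordDist S 1 x := by
  obtain ⟨l, hl, hp, hlen⟩ := hS.exists_length_eq_wordDist 1 x
  refine hlen ▸ le_of_le_of_eq (wordDist_le_length (l := l.map f) ?_ ?_) (by simp)
  · simpa using fun a ha => hf a (hl a ha)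
  · rw [← map_list_prod, hp]; simp

end WordMetric

section Letters

variable {G H}

def letterInv : G ⊕ H → G ⊕ H := Sum.map (·⁻¹) (·⁻¹)

def letterMul : G ⊕ H → G ⊕ H → G ⊕ H
  | .inl g, .inl g' => .inl (g * g')
  | .inr h, .inr h' => .inr (h * h')
  | a, _ => a

@[simp] lemma isLeft_letterInv (a : G ⊕ H) : (letterInv a).isLeft = a.isLeft := by
  cases a <;> rfl

@[simp] lemma isLeft_letterMul (a b : G ⊕ H) : (letterMul a b).isLeft = a.isLeft := by
  cases a <;> cases b <;> rfl

@[simp] lemma evalLetter_letterInv (a : G ⊕ H) :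
    evalLetter G H (letterInv a) = (evalLetter G H a)⁻¹ := by
  cases a <;> simp [letterInv, evalLetter]

lemma evalLetter_letterMul {a b : G ⊕ H} (h : a.isLeft = b.isLeft) :
    evalLetter G H (letterMul a b) = evalLetter G H a * evalLetter G H b := by
  cases a <;> cases b <;> simp_all [letterMul, evalLetter]

lemma evalLetter_ne_one_iff {a : G ⊕ H} :
    evalLetter G H a ≠ 1 ↔ a ≠ .inl 1 ∧ a ≠ .inr 1 := by
  cases a <;> simp [evalLetter, map_eq_one_iff _ Coprod.inl_injective,
    map_eq_one_iff _ Coprod.inr_injective]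

@[simp] lemma listProd_nil : listProd G H [] = 1 := rfl

@[simp] lemma listProd_cons (a : G ⊕ H) (l : List (G ⊕ H)) :
    listProd G H (a :: l) = evalLetter G H a * listProd G H l := by
  simp [listProd]

@[simp] lemma listProd_singleton (a : G ⊕ H) : listProd G H [a] = evalLetter G H a := by
  simp [listProd]

@[simp] lemma listProd_append (l₁ l₂ : List (G ⊕ H)) :
    listProd G H (l₁ ++ l₂) = listProd G H l₁ * listProd G H l₂ := by
  simp [listProd]

@[simp] lemma listProd_reverse_map_letterInv (l : List (G ⊕ H)) :
    listProd G H (l.map letterInv).reverse = (listProd G H l)⁻¹ := by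
  induction l with
  | nil => simp
  | cons a t ih => simp [ih]

lemma reduced_iff {l : List (G ⊕ H)} :
    Reduced G H l ↔ (∀ a ∈ l, a ≠ .inl 1 ∧ a ≠ .inr 1) ∧ l.IsChain (·.isLeft ≠ ·.isLeft) :=
  Iff.rfl

lemma reduced_cons_iff {a : G ⊕ H} {l : List (G ⊕ H)} :
    Reduced G H (a :: l) ↔
      (a ≠ .inl 1 ∧ a ≠ .inr 1) ∧ (∀ b ∈ l.head?, a.isLeft ≠ b.isLeft) ∧ Reduced G H l := by
  simp only [reduced_iff, List.mem_cons, forall_eq_or_imp, List.isChain_cons]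
  tauto

lemma reduced_nil : Reduced G H [] := ⟨by simp, List.isChain_nil⟩

lemma reduced_singleton {a : G ⊕ H} (ha : a ≠ .inl 1 ∧ a ≠ .inr 1) : Reduced G H [a] :=
  reduced_cons_iff.mpr ⟨ha, by simp, reduced_nil⟩

lemma reduced_append_iff {l₁ l₂ : List (G ⊕ H)} :
    Reduced G H (l₁ ++ l₂) ↔ Reduced G H l₁ ∧ Reduced G H l₂ ∧
      ∀ a ∈ l₁.getLast?, ∀ b ∈ l₂.head?, a.isLeft ≠ b.isLeft := by
  simp only [reduced_iff, List.mem_append, List.isChain_append]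
  grind

lemma Reduced.reverse_map_letterInv {l : List (G ⊕ H)} (h : Reduced G H l) :
    Reduced G H (l.map letterInv).reverse := by
  refine reduced_iff.mpr ⟨fun a ha => ?_, ?_⟩
  · obtain ⟨b, hb, rfl⟩ := List.mem_map.mp (List.mem_reverse.mp ha)
    rcases b with g | h' <;> simpa [letterInv] using h.1 _ hb
  · rw [List.isChain_reverse, List.isChain_map]
    exact h.2.imp fun a b hab => by simpa using hab.symm

end Letters

universe u v

/- `G ∗ H` maps to the indexed coproduct of `true ↦ G`, `false ↦ H` (lifted to a common universe),
where reduced words become `CoprodI.Word`s, which are in bijection with the elements. -/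
lemma Reduced.eq_of_listProd_eq {G : Type u} {H : Type v} [Group G] [Group H]
    {l l' : List (G ⊕ H)} (hl : Reduced G H l) (hl' : Reduced G H l')
    (h : listProd G H l = listProd G H l') : l = l' := by
  let M : Bool → Type (max u v) := fun b => cond b (ULift.{v} G) (ULift.{u} H)
  let _ : ∀ b, Group (M b) := fun b =>
    Bool.rec (ULift.group : Group (ULift.{u} H)) (ULift.group : Group (ULift.{v} G)) b
  let φ : Coprod G H →* CoprodI M :=
    Coprod.lift ((CoprodI.of (i := true)).comp MulEquiv.ulift.symm.toMonoidHom)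
      ((CoprodI.of (i := false)).comp MulEquiv.ulift.symm.toMonoidHom)
  let _ : ∀ b, DecidableEq (M b) := fun _ => Classical.decEq _
  let f : G ⊕ H → Σ b, M b := Sum.elim (fun g => ⟨true, ULift.up g⟩) (fun h => ⟨false, ULift.up h⟩)
  have hf : f.Injective := by
    rintro (g | h) (g' | h') e <;>
      simp only [f, Sum.elim_inl, Sum.elim_inr, Sigma.mk.injEq, heq_eq_eq, Bool.false_eq_true,
        Bool.true_eq_false, false_and, true_and] at e <;>
      exact congrArg _ (congrArg ULift.down e)
  have toWord : ∀ l, Reduced G H l →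
      ∃ w : CoprodI.Word M, w.toList = l.map f ∧ w.prod = φ (listProd G H l) := by
    intro l hl
    refine ⟨⟨l.map f, ?_, ?_⟩, rfl, ?_⟩
    · simp only [List.mem_map]
      rintro _ ⟨a, ha, rfl⟩
      have := (reduced_iff.mp hl).1 a ha
      rcases a with g | h <;> simp only [f, Sum.elim_inl, Sum.elim_inr, ne_eq, reduceCtorEq,
        not_false_eq_true, and_true, true_and] at this ⊢ <;>
        exact fun e => this (congrArg _ (congrArg ULift.down e))
    · rw [List.isChain_map]
      exact (reduced_iff.mp hl).2.imp fun a b hab => by cases a <;> cases b <;> simp_all [f]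
    · rw [CoprodI.Word.prod, List.map_map, listProd, map_list_prod, List.map_map]
      congr 1
      refine List.map_congr_left fun a _ => ?_
      cases a <;> rfl
  obtain ⟨w, hw, hwp⟩ := toWord l hl
  obtain ⟨w', hw', hwp'⟩ := toWord l' hl'
  have hww' : w = w' :=
    CoprodI.Word.equiv.symm.injective (hwp.trans ((congrArg φ h).trans hwp'.symm))
  exact List.map_injective_iff.mpr hf (hw.symm.trans (hww' ▸ hw'))

section FreeProductMetric

variable {G H} {SG : Set G} {SH : Set H}

noncomputable def letterLen (SG : Set G) (SH : Set H) : G ⊕ H → ℕ :=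
  Sum.elim (wordDist SG 1) (wordDist SH 1)

def freeProdGenSet (SG : Set G) (SH : Set H) : Set (Coprod G H) :=
  (Coprod.inl : G →* Coprod G H) '' SG ∪ (Coprod.inr : H →* Coprod G H) '' SH

lemma IsSymmGenSet.freeProd (hG : IsSymmGenSet SG) (hH : IsSymmGenSet SH) :
    IsSymmGenSet (freeProdGenSet SG SH) where
  inv_mem := by
    rintro _ (⟨g, hg, rfl⟩ | ⟨h, hh, rfl⟩)
    · exact Or.inl ⟨g⁻¹, hG.inv_mem g hg, map_inv _ _⟩
    · exact Or.inr ⟨h⁻¹, hH.inv_mem h hh, map_inv _ _⟩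
  closure_eq_top := by
    rw [freeProdGenSet, Subgroup.closure_union, ← MonoidHom.map_closure, ← MonoidHom.map_closure,
      hG.closure_eq_top, hH.closure_eq_top, ← MonoidHom.range_eq_map, ← MonoidHom.range_eq_map,
      Coprod.range_inl_sup_range_inr]

lemma letterLen_letterInv (hG : IsSymmGenSet SG) (hH : IsSymmGenSet SH) (a : G ⊕ H) :
    letterLen SG SH (letterInv a) = letterLen SG SH a := by
  cases a <;> simp [letterLen, letterInv, hG.wordDist_one_inv, hH.wordDist_one_inv]

lemma letterLen_letterMul_le (hG : IsSymmGenSet SG) (hH : IsSymmGenSet SH) {a b : G ⊕ H}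
    (h : a.isLeft = b.isLeft) :
    letterLen SG SH (letterMul a b) ≤ letterLen SG SH a + letterLen SG SH b := by
  cases a <;> cases b <;>
    simp_all [letterMul, letterLen, hG.wordDist_one_mul_le, hH.wordDist_one_mul_le]

lemma wordDist_one_evalLetter_le (hG : IsSymmGenSet SG) (hH : IsSymmGenSet SH) (a : G ⊕ H) :
    wordDist (freeProdGenSet SG SH) 1 (evalLetter G H a) ≤ letterLen SG SH a := by
  cases a with
  | inl g =>
    exact hG.wordDist_one_map_le (T := freeProdGenSet SG SH) Coprod.inl
      (fun s hs => Or.inl ⟨s, hs, rfl⟩) g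
  | inr h =>
    exact hH.wordDist_one_map_le (T := freeProdGenSet SG SH) Coprod.inr
      (fun s hs => Or.inr ⟨s, hs, rfl⟩) h

lemma wordDist_one_listProd_le (hG : IsSymmGenSet SG) (hH : IsSymmGenSet SH) (l : List (G ⊕ H)) :
    wordDist (freeProdGenSet SG SH) 1 (listProd G H l) ≤ (l.map (letterLen SG SH)).sum := by
  induction l with
  | nil => simp
  | cons a t ih =>
    rw [listProd_cons, List.map_cons, List.sum_cons]
    exact ((hG.freeProd hH).wordDist_one_mul_le _ _).trans
      (add_le_add (wordDist_one_evalLetter_le hG hH a) ih)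

lemma exists_letters_of_forall_mem_freeProdGenSet {m : List (Coprod G H)}
    (hm : ∀ x ∈ m, x ∈ freeProdGenSet SG SH) :
    ∃ l : List (G ⊕ H), listProd G H l = m.prod ∧ (l.map (letterLen SG SH)).sum ≤ m.length := by
  induction m with
  | nil => exact ⟨[], rfl, le_rfl⟩
  | cons x m ih =>
    obtain ⟨l, hl, hlen⟩ := ih fun y hy => hm y (List.mem_cons_of_mem x hy)
    have hx : ∃ a : G ⊕ H, evalLetter G H a = x ∧ letterLen SG SH a ≤ 1 := by
      rcases hm x List.mem_cons_self with ⟨g, hg, rfl⟩ | ⟨h, hh, rfl⟩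
      exacts [⟨.inl g, rfl, wordDist_one_le_one_of_mem hg⟩,
        ⟨.inr h, rfl, wordDist_one_le_one_of_mem hh⟩]
    obtain ⟨a, rfl, ha⟩ := hx
    refine ⟨a :: l, by simp [hl], ?_⟩
    simp only [List.map_cons, List.sum_cons, List.length_cons]
    omega

lemma exists_reduced_cons (hG : IsSymmGenSet SG) (hH : IsSymmGenSet SH) (a : G ⊕ H)
    {l : List (G ⊕ H)} (hl : Reduced G H l) :
    ∃ l', Reduced G H l' ∧ listProd G H l' = evalLetter G H a * listProd G H l ∧
      (l'.map (letterLen SG SH)).sum ≤ letterLen SG SH a + (l.map (letterLen SG SH)).sum := by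
  by_cases ha : evalLetter G H a = 1
  · exact ⟨l, hl, by simp [ha], Nat.le_add_left _ _⟩
  rcases l with _ | ⟨b, t⟩
  · exact ⟨[a], reduced_singleton (evalLetter_ne_one_iff.mp ha), by simp, by simp⟩
  obtain ⟨-, hbt, ht⟩ := reduced_cons_iff.mp hl
  by_cases hside : a.isLeft = b.isLeft
  · have hab := evalLetter_letterMul (G := G) (H := H) hside
    by_cases hab1 : evalLetter G H (letterMul a b) = 1
    · refine ⟨t, ht, ?_, by simp; omega⟩
      rw [listProd_cons, ← mul_assoc, ← hab, hab1, one_mul]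
    · refine ⟨letterMul a b :: t, ?_, by simp [hab, mul_assoc], ?_⟩
      · exact reduced_cons_iff.mpr ⟨evalLetter_ne_one_iff.mp hab1, by simpa [hside] using hbt, ht⟩
      · have := letterLen_letterMul_le hG hH hside
        simp only [List.map_cons, List.sum_cons]
        omega
  · refine ⟨a :: b :: t, ?_, by simp, by simp⟩
    exact reduced_cons_iff.mpr ⟨evalLetter_ne_one_iff.mp ha, by simpa using hside, hl⟩

lemma exists_reduced (hG : IsSymmGenSet SG) (hH : IsSymmGenSet SH) (l : List (G ⊕ H)) :
    ∃ l', Reduced G H l' ∧ listProd G H l' = listProd G H l ∧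
      (l'.map (letterLen SG SH)).sum ≤ (l.map (letterLen SG SH)).sum := by
  induction l with
  | nil => exact ⟨[], reduced_nil, rfl, le_rfl⟩
  | cons a t ih =>
    obtain ⟨t', ht', hprod, hlen⟩ := ih
    obtain ⟨l', hl', hprod', hlen'⟩ := exists_reduced_cons hG hH a ht'
    refine ⟨l', hl', by rw [hprod', hprod, listProd_cons], ?_⟩
    simp only [List.map_cons, List.sum_cons]
    omega

lemma sum_letterLen_le_wordDist (hG : IsSymmGenSet SG) (hH : IsSymmGenSet SH)
    {l : List (G ⊕ H)} (hl : Reduced G H l) :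
    (l.map (letterLen SG SH)).sum ≤ wordDist (freeProdGenSet SG SH) 1 (listProd G H l) := by
  obtain ⟨m, hm, hmprod, hmlen⟩ := (hG.freeProd hH).exists_length_eq_wordDist 1 (listProd G H l)
  obtain ⟨L, hL, hLlen⟩ := exists_letters_of_forall_mem_freeProdGenSet hm
  obtain ⟨l', hl', hl'prod, hl'len⟩ := exists_reduced hG hH L
  obtain rfl : l' = l := hl'.eq_of_listProd_eq hl (by rw [hl'prod, hL, hmprod, inv_one, one_mul])
  omega

lemma wordDist_one_listProd (hG : IsSymmGenSet SG) (hH : IsSymmGenSet SH)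
    {l : List (G ⊕ H)} (hl : Reduced G H l) :
    wordDist (freeProdGenSet SG SH) 1 (listProd G H l) = (l.map (letterLen SG SH)).sum :=
  (wordDist_one_listProd_le hG hH l).antisymm (sum_letterLen_le_wordDist hG hH hl)

lemma wordDist_one_evalLetter (hG : IsSymmGenSet SG) (hH : IsSymmGenSet SH) (a : G ⊕ H) :
    wordDist (freeProdGenSet SG SH) 1 (evalLetter G H a) = letterLen SG SH a := by
  by_cases ha : a ≠ .inl 1 ∧ a ≠ .inr 1
  · simpa using wordDist_one_listProd hG hH (reduced_singleton ha)
  · rw [not_and_or, not_not, not_not] at ha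
    rcases ha with rfl | rfl <;> simp [letterLen, evalLetter]

lemma wordDist_mul_inl (hG : IsSymmGenSet SG) (hH : IsSymmGenSet SH) (x : Coprod G H)
    (z z' : G) :
    wordDist (freeProdGenSet SG SH) (x * Coprod.inl z) (x * Coprod.inl z') = wordDist SG z z' := by
  rw [wordDist_mul_left, wordDist_eq_wordDist_one, wordDist_eq_wordDist_one z, ← map_inv,
    ← map_mul]
  exact wordDist_one_evalLetter hG hH (.inl _)

lemma wordDist_mul_inr (hG : IsSymmGenSet SG) (hH : IsSymmGenSet SH) (x : Coprod G H)
    (z z' : H) :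
    wordDist (freeProdGenSet SG SH) (x * Coprod.inr z) (x * Coprod.inr z') = wordDist SH z z' := by
  rw [wordDist_mul_left, wordDist_eq_wordDist_one, wordDist_eq_wordDist_one z, ← map_inv,
    ← map_mul]
  exact wordDist_one_evalLetter hG hH (.inr _)

lemma wordDist_mul_evalLetter_self (hG : IsSymmGenSet SG) (hH : IsSymmGenSet SH)
    (x : Coprod G H) (a : G ⊕ H) :
    wordDist (freeProdGenSet SG SH) (x * evalLetter G H a) x = letterLen SG SH a := by
  rw [wordDist_eq_wordDist_one, mul_inv_rev, inv_mul_cancel_right, ← evalLetter_letterInv,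
    wordDist_one_evalLetter hG hH, letterLen_letterInv hG hH]

lemma wordDist_self_mul_evalLetter (hG : IsSymmGenSet SG) (hH : IsSymmGenSet SH)
    (x : Coprod G H) (a : G ⊕ H) :
    wordDist (freeProdGenSet SG SH) x (x * evalLetter G H a) = letterLen SG SH a := by
  rw [wordDist_eq_wordDist_one, inv_mul_cancel_left, wordDist_one_evalLetter hG hH]

lemma wordDist_listProd_append_cons (hG : IsSymmGenSet SG) (hH : IsSymmGenSet SH)
    {q r r' : List (G ⊕ H)} {c c' : G ⊕ H} (h : Reduced G H (q ++ c :: r))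
    (h' : Reduced G H (q ++ c' :: r')) (hside : c.isLeft = c'.isLeft) (hne : c ≠ c') :
    wordDist (freeProdGenSet SG SH) (listProd G H (q ++ c :: r)) (listProd G H (q ++ c' :: r')) =
      (r.map (letterLen SG SH)).sum + letterLen SG SH (letterMul (letterInv c) c') +
        (r'.map (letterLen SG SH)).sum := by
  obtain ⟨-, hcr, -⟩ := reduced_append_iff.mp h
  obtain ⟨-, hcr', -⟩ := reduced_append_iff.mp h'
  obtain ⟨hc, hcr_head, hr⟩ := reduced_cons_iff.mp hcr
  obtain ⟨hc', hcr'_head, hr'⟩ := reduced_cons_iff.mp hcr'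
  set m := letterMul (letterInv c) c'
  have hm : evalLetter G H m = (evalLetter G H c)⁻¹ * evalLetter G H c' := by
    rw [evalLetter_letterMul (by simpa using hside), evalLetter_letterInv]
  have hm1 : evalLetter G H m ≠ 1 := by
    rw [hm, Ne, inv_mul_eq_one]
    intro e
    exact hne (List.singleton_inj.mp ((reduced_singleton hc).eq_of_listProd_eq
      (reduced_singleton hc') (by simpa using e)))
  have hred : Reduced G H ((r.map letterInv).reverse ++ m :: r') := by
    refine reduced_append_iff.mpr ⟨hr.reverse_map_letterInv, reduced_cons_iff.mpr
      ⟨evalLetter_ne_one_iff.mp hm1, by simpa [m, hside] using hcr'_head, hr'⟩, ?_⟩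
    rcases r with _ | ⟨d, r⟩
    · simp
    · simpa [m, List.getLast?_reverse] using fun e => hcr_head d rfl e.symm
  have hprod : (listProd G H (q ++ c :: r))⁻¹ * listProd G H (q ++ c' :: r') =
      listProd G H ((r.map letterInv).reverse ++ m :: r') := by
    simp only [listProd_append, listProd_cons, listProd_reverse_map_letterInv, hm]
    group
  rw [wordDist_eq_wordDist_one, hprod, wordDist_one_listProd hG hH hred]
  simp [List.sum_reverse, Function.comp_def, letterLen_letterInv hG hH, add_assoc]

end FreeProductMetric

lemma List.exists_eq_append_cons_of_ne {α : Type*} :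
    ∀ {s s' : List α}, s.length = s'.length → s ≠ s' →
      ∃ p c r c' r', s = p ++ c :: r ∧ s' = p ++ c' :: r' ∧ c ≠ c'
  | [], [], _, hne => absurd rfl hne
  | c :: r, c' :: r', hlen, hne => by
    by_cases hc : c = c'
    · subst hc
      obtain ⟨p, d, t, d', t', rfl, rfl, hd⟩ :=
        exists_eq_append_cons_of_ne (by simpa using hlen) fun e => hne (by rw [e])
      exact ⟨c :: p, d, t, d', t', rfl, rfl, hd⟩
    · exact ⟨[], c, r, c', r', rfl, rfl, hc⟩

section BassSerreTree

variable {G H}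

/- For `w = w'g` with `lw'` the reduced word of `w'`: `subtreePreimage lw' j` is `π⁻¹(T_j^w)`,
`branchWords lw' n` indexes the vertices at distance `n + 1` from `π(w)`, and `fibre lw' s` is
the preimage of the vertex indexed by `s`. -/
def subtreePreimage (l : List (G ⊕ H)) (j : ℕ) : Set (Coprod G H) :=
  {y | ∃ s : List (G ⊕ H), s ≠ [] ∧ s.length ≤ j + 1 ∧ (∀ a ∈ s.head?, a.isLeft = true) ∧
    Reduced G H (l ++ s) ∧ listProd G H (l ++ s) = y}

def branchWords (l : List (G ⊕ H)) (n : ℕ) : Set (List (G ⊕ H)) :=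
  {s | s.length = n + 1 ∧ (∀ a ∈ s.head?, a.isLeft = true) ∧ Reduced G H (l ++ s)}

def fibre (l s : List (G ⊕ H)) : Set (Coprod G H) :=
  {y | ∃ a : G ⊕ H, Reduced G H (l ++ s ++ [a]) ∧ y = listProd G H (l ++ s ++ [a])}

lemma subtreePreimage_succ (l : List (G ⊕ H)) (n : ℕ) :
    subtreePreimage l (n + 1) = subtreePreimage l n ∪ ⋃ s ∈ branchWords l n, fibre l s := by
  ext y
  simp only [subtreePreimage, branchWords, fibre, Set.mem_ofPred_eq, Set.mem_union, Set.mem_iUnion,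
    exists_prop]
  constructor
  · rintro ⟨s, hne, hlen, hhead, hred, rfl⟩
    by_cases hle : s.length ≤ n + 1
    · exact Or.inl ⟨s, hne, hle, hhead, hred, rfl⟩
    obtain ⟨s₀, a, rfl⟩ := (s.eq_nil_or_concat'.resolve_left hne)
    have hs₀ : s₀ ≠ [] := by rintro rfl; simp at hle
    rw [← List.append_assoc] at hred
    refine Or.inr ⟨s₀, ⟨by simp at hlen hle; omega, ?_, (reduced_append_iff.mp hred).1⟩, a, hred,
      by rw [List.append_assoc]⟩
    simpa [List.head?_append_of_ne_nil _ hs₀] using hhead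
  · rintro (⟨s, hne, hlen, hhead, hred, rfl⟩ | ⟨s, ⟨hslen, hshead, -⟩, a, hred, rfl⟩)
    · exact ⟨s, hne, by omega, hhead, hred, rfl⟩
    have hs : s ≠ [] := by rintro rfl; simp at hslen
    refine ⟨s ++ [a], by simp, by simp [hslen], ?_, by rwa [← List.append_assoc],
      by rw [List.append_assoc]⟩
    simpa [List.head?_append_of_ne_nil _ hs] using hshead

lemma disjoint_subtreePreimage_fibre {l s : List (G ⊕ H)} {n : ℕ} (hs : s.length = n + 1) :
    Disjoint (subtreePreimage l n) (fibre l s) := by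
  rw [Set.disjoint_left]
  rintro _ ⟨t, -, ht, -, hred, rfl⟩ ⟨a, hred', hprod⟩
  have := congrArg List.length (hred.eq_of_listProd_eq hred' hprod)
  simp at this
  omega

lemma disjoint_fibre {l s s' : List (G ⊕ H)} (hne : s ≠ s') :
    Disjoint (fibre l s) (fibre l s') := by
  rw [Set.disjoint_left]
  rintro _ ⟨a, hred, rfl⟩ ⟨a', hred', hprod⟩
  exact hne (List.append_cancel_left
    (List.append_inj_left' (hred.eq_of_listProd_eq hred' hprod) rfl))

lemma isLeft_eq_of_reduced {p r r' : List (G ⊕ H)} {c c' : G ⊕ H}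
    (h : Reduced G H (p ++ c :: r)) (h' : Reduced G H (p ++ c' :: r'))
    (hhead : ∀ a ∈ (p ++ c :: r).head?, ∀ a' ∈ (p ++ c' :: r').head?, a.isLeft = a'.isLeft) :
    c.isLeft = c'.isLeft := by
  rcases p.eq_nil_or_concat with rfl | ⟨q, d, rfl⟩
  · exact hhead c rfl c' rfl
  · have hd := (reduced_append_iff.mp h).2.2 d (by simp) c rfl
    have hd' := (reduced_append_iff.mp h').2.2 d (by simp) c' rfl
    exact (Bool.eq_not_of_ne hd.symm).trans (Bool.eq_not_of_ne hd'.symm).symm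

lemma wordDist_of_mem_fibre (hG : IsSymmGenSet SG) (hH : IsSymmGenSet SH)
    {l s s' : List (G ⊕ H)} {n : ℕ} (hs : s ∈ branchWords l n) (hs' : s' ∈ branchWords l n)
    (hne : s ≠ s') {y y' : Coprod G H} (hy : y ∈ fibre l s) (hy' : y' ∈ fibre l s') :
    wordDist (freeProdGenSet SG SH) y y' =
      wordDist (freeProdGenSet SG SH) y (listProd G H (l ++ s)) +
      wordDist (freeProdGenSet SG SH) (listProd G H (l ++ s)) (listProd G H (l ++ s')) +
      wordDist (freeProdGenSet SG SH) (listProd G H (l ++ s')) y' := by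
  obtain ⟨hlen, hhead, hred⟩ := hs
  obtain ⟨hlen', hhead', hred'⟩ := hs'
  obtain ⟨a, hya, rfl⟩ := hy
  obtain ⟨b, hyb, rfl⟩ := hy'
  obtain ⟨p, c, r, c', r', rfl, rfl, hcc⟩ :=
    List.exists_eq_append_cons_of_ne (hlen.trans hlen'.symm) hne
  have hside : c.isLeft = c'.isLeft :=
    isLeft_eq_of_reduced (reduced_append_iff.mp hred).2.1 (reduced_append_iff.mp hred').2.1
      fun x hx x' hx' => (hhead x hx).trans (hhead' x' hx').symm
  have branch := fun {t t' : List (G ⊕ H)} (ht : Reduced G H (l ++ p ++ c :: t))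
      (ht' : Reduced G H (l ++ p ++ c' :: t')) =>
    wordDist_listProd_append_cons hG hH ht ht' hside hcc
  have hu := branch (t := r) (t' := r') (by simpa using hred) (by simpa using hred')
  have hy := branch (t := r ++ [a]) (t' := r' ++ [b]) (by simpa using hya) (by simpa using hyb)
  rw [listProd_append _ [a], listProd_append _ [b], listProd_singleton, listProd_singleton,
    wordDist_mul_evalLetter_self hG hH, wordDist_self_mul_evalLetter hG hH, ← listProd_singleton a,
    ← listProd_singleton b, ← listProd_append, ← listProd_append]
  simp only [List.append_assoc, List.cons_append] at hu hy ⊢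
  rw [hu, hy]
  simp only [List.map_append, List.sum_append, List.map_cons, List.map_nil, List.sum_cons,
    List.sum_nil]
  omega

end BassSerreTree

theorem stmt19
    (SG : Set G) (hSGsym : ∀ s ∈ SG, s⁻¹ ∈ SG)
    (hSGgen : Subgroup.closure SG = ⊤)
    (SH : Set H) (hSHsym : ∀ s ∈ SH, s⁻¹ ∈ SH)
    (hSHgen : Subgroup.closure SH = ⊤)
    (S : Set (Coprod G H))
    (hS : S = (Coprod.inl : G →* Coprod G H) '' SG ∪ (Coprod.inr : H →* Coprod G H) '' SH)
    (n : ℕ)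
    (lw' : List (G ⊕ H))
    -- `Pre j` is the preimage `π⁻¹(T_j^w)` of the depth-`j` subtree below `π(w)`
    (Pre : ℕ → Set (Coprod G H))
    (hPre : ∀ j : ℕ, Pre j = {y | ∃ s : List (G ⊕ H), s ≠ [] ∧ s.length ≤ j + 1 ∧
      (∀ a ∈ s.head?, a.isLeft = true) ∧ Reduced G H (lw' ++ s) ∧ listProd G H (lw' ++ s) = y})
    -- `D` is the set of branch words of the vertices at distance exactly `n+1` from `π(w)`
    (D : Set (List (G ⊕ H)))
    (hD : D = {s | s.length = n + 1 ∧ (∀ a ∈ s.head?, a.isLeft = true) ∧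
      Reduced G H (lw' ++ s)})
    -- `C s` is the fibre `π⁻¹(v)` over the vertex `v` with branch word `s`
    (C : List (G ⊕ H) → Set (Coprod G H))
    (hC : ∀ s, C s = {y | ∃ a : G ⊕ H,
      Reduced G H (lw' ++ s ++ [a]) ∧ y = listProd G H (lw' ++ s ++ [a])}) :
    -- the decomposition π⁻¹(T_{n+1}^w) = π⁻¹(T_n^w) ⊔ ⨆_s C_s
    (Pre (n + 1) = Pre n ∪ ⋃ s ∈ D, C s) ∧
    (∀ s ∈ D, Disjoint (Pre n) (C s)) ∧
    (∀ s ∈ D, ∀ s' ∈ D, s ≠ s' → Disjoint (C s) (C s')) ∧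
    -- each fibre is isometric to the corresponding factor via left translation
    (∀ s ∈ D, (∀ z z' : G,
        wordDist S (listProd G H (lw' ++ s) * Coprod.inl z)
          (listProd G H (lw' ++ s) * Coprod.inl z') = wordDist SG z z') ∧
      (∀ z z' : H,
        wordDist S (listProd G H (lw' ++ s) * Coprod.inr z)
          (listProd G H (lw' ++ s) * Coprod.inr z') = wordDist SH z z')) ∧
    -- distances between distinct fibres pass through the branch points
    (∀ s ∈ D, ∀ s' ∈ D, s ≠ s' → ∀ y ∈ C s, ∀ y' ∈ C s',
      wordDist S y y' =
        wordDist S y (listProd G H (lw' ++ s)) +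
        wordDist S (listProd G H (lw' ++ s)) (listProd G H (lw' ++ s')) +
        wordDist S (listProd G H (lw' ++ s')) y') := by
  have hG : IsSymmGenSet SG := ⟨hSGsym, hSGgen⟩
  have hH : IsSymmGenSet SH := ⟨hSHsym, hSHgen⟩
  obtain rfl : S = freeProdGenSet SG SH := hS
  obtain rfl : Pre = subtreePreimage lw' := funext hPre
  obtain rfl : D = branchWords lw' n := hD
  obtain rfl : C = fibre lw' := funext hC
  exact ⟨subtreePreimage_succ lw' n, fun s hs => disjoint_subtreePreimage_fibre hs.1,
    fun s _ s' _ hne => disjoint_fibre hne,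
    fun s _ => ⟨wordDist_mul_inl hG hH _, wordDist_mul_inr hG hH _⟩,
    fun s hs s' hs' hne y hy y' hy' => wordDist_of_mem_fibre hG hH hs hs' hne hy hy'⟩
end
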